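/- arXiv:2005.00666 — 8 statements merged into one kernel-verified Lean document; each statement's English description precedes it below -/
import Mathlib

section
/- Let g : [0,1] → [0,1] be strictly decreasing with g(1−w) = 1 − g(w) for all w ∈ [0,1]. Define E₁ = {x ∈ Δ×Δ : x^i_v = g(x^j_v) for all i ∈ {1,2}, v ∈ {l,r}, j = 3−i} and E₂ = {x ∈ Δ×Δ : x = (w, 1−w, 1−w, w) for some w with w = g(1−w)}. Then E₁ = E₂. -/
/-- Membership in the 1-simplex Δ = {(a,b) : a,b ≥ 0, a+b = 1}. -/
def inSimplex (a b : ℝ) : Prop := 0 ≤ a ∧ 0 ≤ b ∧ a + b = 1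

/-- A point `(x¹_l, x¹_r, x²_l, x²_r)` of `ℝ⁴` lies in Δ×Δ. -/
def inDD (p : ℝ × ℝ × ℝ × ℝ) : Prop :=
  inSimplex p.1 p.2.1 ∧ inSimplex p.2.2.1 p.2.2.2

/-- Let `g : [0,1] → [0,1]` be strictly decreasing with `g(1−w) = 1 − g(w)`.
Then `E₁ = E₂`, where `E₁` consists of the points of Δ×Δ with `x^i_v = g(x^j_v)`
for all `i, v` (`j = 3 − i`), and `E₂` of the points `(w, 1−w, 1−w, w)` with
`w = g(1−w)`. -/
theorem E1_eq_E2 (g : ℝ → ℝ)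
    (hg_maps : ∀ w ∈ Set.Icc (0:ℝ) 1, g w ∈ Set.Icc (0:ℝ) 1)
    (hg_anti : StrictAntiOn g (Set.Icc (0:ℝ) 1))
    (hg_symm : ∀ w ∈ Set.Icc (0:ℝ) 1, g (1 - w) = 1 - g w) :
    {p : ℝ × ℝ × ℝ × ℝ | inDD p ∧
        p.1 = g p.2.2.1 ∧ p.2.1 = g p.2.2.2 ∧ p.2.2.1 = g p.1 ∧ p.2.2.2 = g p.2.1}
      = {p : ℝ × ℝ × ℝ × ℝ |
          ∃ w ∈ Set.Icc (0:ℝ) 1, w = g (1 - w) ∧ p = (w, 1 - w, 1 - w, w)} := by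
  ext ⟨a, b, c, d⟩
  simp only [Set.mem_setOf_eq, inDD, inSimplex]
  constructor
  · rintro ⟨⟨⟨ha0, hb0, hab⟩, ⟨hc0, hd0, hcd⟩⟩, h1, h2, h3, h4⟩
    have ha : a ∈ Set.Icc (0:ℝ) 1 := ⟨ha0, by linarith⟩
    have hc : c ∈ Set.Icc (0:ℝ) 1 := ⟨hc0, by linarith⟩
    have h1a : (1 - a) ∈ Set.Icc (0:ℝ) 1 := ⟨by linarith, by linarith⟩
    -- show c = 1 - a
    have hceq : c = 1 - a := by
      rcases lt_trichotomy c (1 - a) with h | h | h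
      · exfalso
        have := hg_anti hc h1a h
        rw [hg_symm a ha, ← h3, ← h1] at this
        linarith
      · exact h
      · exfalso
        have := hg_anti h1a hc h
        rw [hg_symm a ha, ← h3, ← h1] at this
        linarith
    refine ⟨a, ha, ?_, ?_⟩
    · rw [← hceq, ← h1]
    · simp only [Prod.mk.injEq]
      exact ⟨trivial, by linarith, by linarith, by linarith⟩
  · rintro ⟨w, hw, hwg, heq⟩
    simp only [Prod.mk.injEq] at heq
    obtain ⟨h1, h2, h3, h4⟩ := heq
    have h1w : (1 - w) ∈ Set.Icc (0:ℝ) 1 := ⟨by linarith [hw.2], by linarith [hw.1]⟩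
    have hgw : g w = 1 - w := by
      have := hg_symm (1 - w) h1w
      simp only [sub_sub_cancel] at this
      linarith
    subst h1; subst h2; subst h3; subst h4
    refine ⟨⟨⟨hw.1, by linarith [hw.2], by ring⟩, ⟨by linarith [hw.2], hw.1, by ring⟩⟩,
      hwg, ?_, hgw.symm, hwg⟩
    rw [hgw]
end

section
/- If 0 ≤ β ≤ 2, then w = 1/2 is the unique solution in [0,1] of the fixed-point equation w = 1/(1 + exp(β − 2βw)). -/
/-!
Substituting `u = 1 - 2w`, a solution of the fixed-point equation lies in `(0, 1)` and satisfies
`β u = log (1 + u) - log (1 - u) = 2 artanh u`. Since `2u + 2u³/3 ≤ 2 artanh u` for `0 < u < 1`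
and `artanh` is odd, the right-hand side exceeds `2 |u| ≥ β |u|` in absolute value unless `u = 0`.
-/

open Real

theorem two_mul_lt_log_one_add_sub_log_one_sub {u : ℝ} (h0 : 0 < u) (h1 : u < 1) :
    2 * u < log (1 + u) - log (1 - u) := by
  have hseries := hasSum_log_sub_log_of_abs_lt_one (abs_lt.mpr ⟨by linarith, h1⟩)
  have hpartial := sum_le_hasSum (Finset.range 2) (fun k _ => by positivity) hseries
  norm_num [Finset.sum_range_succ] at hpartial
  nlinarith [pow_pos h0 3]

theorem eq_zero_of_mul_eq_log_one_add_sub_log_one_sub {β u : ℝ} (hβ : β ≤ 2) (hu : |u| < 1)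
    (h : β * u = log (1 + u) - log (1 - u)) : u = 0 := by
  obtain ⟨hu₁, hu₂⟩ := abs_lt.mp hu
  rcases lt_trichotomy u 0 with hneg | hzero | hpos
  · have hodd := two_mul_lt_log_one_add_sub_log_one_sub (neg_pos.mpr hneg) (by linarith)
    rw [sub_neg_eq_add, ← sub_eq_add_neg] at hodd
    nlinarith
  · exact hzero
  · have := two_mul_lt_log_one_add_sub_log_one_sub hpos hu₂
    nlinarith

theorem exp_eq_div_of_eq_one_div_one_add_exp {t w : ℝ} (h : w = 1 / (1 + exp t)) :
    0 < w ∧ w < 1 ∧ exp t = (1 - w) / w := by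
  have hexp := exp_pos t
  have hw : 0 < w := h ▸ by positivity
  refine ⟨hw, ?_, ?_⟩
  · rw [h, div_lt_one (by positivity)]
    linarith
  · rw [eq_div_iff hw.ne', h]
    field_simp
    ring

theorem fixed_point_unique_of_beta_le_two_general (β : ℝ) (h2 : β ≤ 2) :
    ∀ w ∈ Set.Icc (0:ℝ) 1,
      (w = 1 / (1 + Real.exp (β - 2 * β * w)) ↔ w = 1/2) := by
  intro w _
  constructor
  · intro hfix
    obtain ⟨hw0, hw1, hexp⟩ := exp_eq_div_of_eq_one_div_one_add_exp hfix
    have hlog : β * (1 - 2 * w) = log (1 + (1 - 2 * w)) - log (1 - (1 - 2 * w)) := by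
      rw [← log_div (by linarith) (by linarith), show (1 + (1 - 2 * w)) / (1 - (1 - 2 * w)) =
        (1 - w) / w by ring, ← hexp, log_exp]
      ring
    have hu := eq_zero_of_mul_eq_log_one_add_sub_log_one_sub h2
      (abs_lt.mpr ⟨by linarith, by linarith⟩) hlog
    linarith
  · rintro rfl
    rw [show β - 2 * β * (1 / 2) = 0 by ring, exp_zero]
    norm_num

/-- If `0 ≤ β ≤ 2`, then `w = 1/2` is the unique solution in `[0,1]` of the
fixed-point equation `w = 1/(1 + exp(β − 2βw))`. -/
theorem fixed_point_unique_of_beta_le_two (β : ℝ) (h0 : 0 ≤ β) (h2 : β ≤ 2) :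
    ∀ w ∈ Set.Icc (0:ℝ) 1,
      (w = 1 / (1 + Real.exp (β - 2 * β * w)) ↔ w = 1/2) :=
  fixed_point_unique_of_beta_le_two_general β h2
end

section
/- If β > 2, then the equation w = 1/(1 + exp(β − 2βw)) has exactly one solution w in the interval [0, 1/2), in addition to the solution w = 1/2. -/
/-!
Writing `w = 1 / (1 + exp (β - 2βw))` as `w = σ(2βw - β)` with the logistic sigmoid `σ`, the
fixed points are the zeros of `h w = w - σ(2βw - β)`. Since `σ` is strictly convex on `(-∞, 0]`,
`h` is strictly concave on `[0, 1/2]`, so besides `h (1/2) = 0` it has at most one zero there.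
One exists because `h 0 < 0` while `h' (1/2) = 1 - β/2 < 0` makes `h` positive just left of `1/2`.
-/

open Real Set Filter Topology

theorem exists_mem_Ioo_lt_of_hasDerivWithinAt_Iio_neg {f : ℝ → ℝ} {f' a b : ℝ}
    (hf : HasDerivWithinAt f f' (Iio b) b) (hf' : f' < 0) (hab : a < b) :
    ∃ t ∈ Ioo a b, f b < f t := by
  have hslope : ∀ᶠ t in 𝓝[<] b, slope f b t < 0 := hf.limsup_slope_le' (lt_irrefl b) hf'
  obtain ⟨t, hslope_t, ht⟩ := (hslope.and (Ioo_mem_nhdsLT hab)).exists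
  refine ⟨t, ht, ?_⟩
  rw [slope_def_field, div_neg_iff] at hslope_t
  rcases hslope_t with ⟨hpos, -⟩ | ⟨-, hneg⟩
  · linarith
  · linarith [ht.2]

theorem StrictConcaveOn.existsUnique_zero_Ico {f : ℝ → ℝ} {f' a b : ℝ}
    (hab : a < b) (hf : StrictConcaveOn ℝ (Icc a b) f) (hcont : ContinuousOn f (Icc a b))
    (ha : f a < 0) (hb : f b = 0) (hf' : HasDerivWithinAt f f' (Iio b) b) (hf'_neg : f' < 0) :
    ∃! x, x ∈ Ico a b ∧ f x = 0 := by
  obtain ⟨t, ht, hft⟩ := exists_mem_Ioo_lt_of_hasDerivWithinAt_Iio_neg hf' hf'_neg hab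
  obtain ⟨x, hx, hfx⟩ := intermediate_value_Icc ht.1.le (hcont.mono (Icc_subset_Icc_right ht.2.le))
    ⟨ha.le, hb ▸ hft.le⟩
  have hx' : x ∈ Ico a b := ⟨hx.1, hx.2.trans_lt ht.2⟩
  refine ⟨x, ⟨hx', hfx⟩, ?_⟩
  have no_zero_between : ∀ y z, y ∈ Ico a b → z ∈ Ico a b → f y = 0 → y < z → f z ≠ 0 := by
    intro y z hy hz hfy hyz hfz
    have := hf.lt_on_openSegment (Ico_subset_Icc_self hy) (right_mem_Icc.2 hab.le)
      (hyz.trans hz.2).ne (by rw [openSegment_eq_Ioo (hyz.trans hz.2)]; exact ⟨hyz, hz.2⟩)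
    simp [hfy, hb, hfz] at this
  rintro y ⟨hy, hfy⟩
  rcases lt_trichotomy y x with hyx | rfl | hxy
  · exact absurd hfx (no_zero_between y x hy hx' hfy hyx)
  · rfl
  · exact absurd hfy (no_zero_between x y hx' hy hfx hxy)

theorem strictConvexOn_sigmoid_Iic : StrictConvexOn ℝ (Iic 0) sigmoid := by
  refine StrictMonoOn.strictConvexOn_of_deriv (convex_Iic 0) continuous_sigmoid.continuousOn ?_
  rw [deriv_sigmoid, interior_Iic]
  intro x hx y hy hxy
  have hσy : sigmoid y < 1 / 2 := by simpa [sigmoid_zero] using sigmoid_lt hy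
  have hσxy : sigmoid x < sigmoid y := sigmoid_lt hxy
  -- `s ↦ s (1 - s)` is strictly increasing for `s < 1/2`
  nlinarith

theorem StrictConvexOn.comp_mul_add {s : Set ℝ} {f : ℝ → ℝ} (hf : StrictConvexOn ℝ s f)
    {c : ℝ} (hc : c ≠ 0) (d : ℝ) :
    StrictConvexOn ℝ ((fun x ↦ c * x + d) ⁻¹' s) (fun x ↦ f (c * x + d)) := by
  have affine_combo : ∀ x y a b : ℝ, a + b = 1 →
      c * (a • x + b • y) + d = a • (c * x + d) + b • (c * y + d) := by
    intro x y a b hab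
    simp only [smul_eq_mul]
    linear_combination d * hab.symm
  refine ⟨fun x hx y hy a b ha hb hab ↦ ?_, fun x hx y hy hxy a b ha hb hab ↦ ?_⟩
  · change c * (a • x + b • y) + d ∈ s
    rw [affine_combo x y a b hab]
    exact hf.1 hx hy ha hb hab
  · change f (c * (a • x + b • y) + d) < a • f (c * x + d) + b • f (c * y + d)
    rw [affine_combo x y a b hab]
    exact hf.2 hx hy (by simpa [hc] using hxy) ha hb hab

/-- If `β > 2`, the equation `w = 1/(1 + exp(β − 2βw))` has exactly one solution in
`[0, 1/2)`, in addition to the solution `w = 1/2`. -/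
theorem fixed_point_exists_unique_of_beta_gt_two (β : ℝ) (hβ : 2 < β) :
    ((1/2 : ℝ) = 1 / (1 + Real.exp (β - 2 * β * (1/2)))) ∧
      ∃! w : ℝ, w ∈ Set.Ico (0:ℝ) (1/2) ∧ w = 1 / (1 + Real.exp (β - 2 * β * w)) := by
  have to_sigmoid : ∀ w, 1 / (1 + exp (β - 2 * β * w)) = sigmoid (2 * β * w + -β) := by
    intro w
    rw [sigmoid_def, one_div]
    ring_nf
  simp only [to_sigmoid]
  set h : ℝ → ℝ := fun w ↦ w - sigmoid (2 * β * w + -β)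
  have hhalf : 2 * β * (1 / 2) + -β = 0 := by ring
  refine ⟨by rw [hhalf, sigmoid_zero]; norm_num, ?_⟩
  have hconcave : StrictConcaveOn ℝ (Icc 0 (1 / 2)) h := by
    refine (concaveOn_id (convex_Icc 0 (1 / 2))).sub_strictConvexOn
      ((strictConvexOn_sigmoid_Iic.comp_mul_add (by positivity) (-β)).subset ?_ (convex_Icc _ _))
    intro w hw
    simp only [mem_preimage, mem_Iic]
    nlinarith [hw.2]
  have hderiv : HasDerivAt h (1 - β / 2) (1 / 2) := by
    have hinner := ((hasDerivAt_id' (1 / 2 : ℝ)).const_mul (2 * β)).add_const (-β)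
    refine ((hasDerivAt_id _).sub ((hasDerivAt_sigmoid _).comp _ hinner)).congr_deriv ?_
    rw [hhalf, sigmoid_zero]
    ring
  have hneg_at_zero : h 0 < 0 := by simpa [h] using sigmoid_pos (-β)
  have hzero_at_half : h (1 / 2) = 0 := by
    simp only [h, hhalf, sigmoid_zero]
    norm_num
  simpa only [h, sub_eq_zero] using hconcave.existsUnique_zero_Ico (by norm_num) (by fun_prop)
    hneg_at_zero hzero_at_half hderiv.hasDerivWithinAt (by linarith)
end

section
/- For β > 2 and w ∈ [0, 1/2), define h(w,β) = β/(2 + 2cosh(β − 2wβ)). Then the map w ↦ −1 + 2h(w,β) is strictly increasing on [0, 1/2) and vanishes at exactly one point w* given by w* = (β − arcosh(β − 1))/(2β). -/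
/-!
Put `t = β - 2wβ`, which decreases through `(0, β]` as `w` runs over `[0, 1/2)`. Since `cosh` is
increasing on `[0, ∞)`, the expression `-1 + 2β / (2 + 2 cosh t)` decreases in `t`, hence increases
in `w`, and it vanishes exactly when `cosh t = β - 1`, i.e. `t = arcosh (β - 1)`. This root lies in
`(0, β)` because `0 < arcosh y < y` for `y > 1`.
-/

/-- Inverse hyperbolic cosine on `[1, ∞)`. -/
noncomputable def arcosh (x : ℝ) : ℝ := Real.log (x + Real.sqrt (x^2 - 1))

open Real hiding arcosh

theorem arcosh_eq_real_arcosh (x : ℝ) : arcosh x = Real.arcosh x := rfl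

theorem Real.self_lt_cosh (x : ℝ) : x < cosh x := by
  rcases le_or_gt 0 x with hx | hx
  · exact (self_le_sinh_iff.2 hx).trans_lt (sinh_lt_cosh x)
  · linarith [one_le_cosh x]

theorem Real.arcosh_lt_self {y : ℝ} (hy : 1 ≤ y) : Real.arcosh y < y := by
  have hcosh : cosh (Real.arcosh y) < cosh y := by
    rw [cosh_arcosh hy]
    exact self_lt_cosh y
  rwa [cosh_lt_cosh, abs_of_nonneg (arcosh_nonneg hy), abs_of_nonneg (by linarith)] at hcosh

theorem Real.cosh_eq_iff_eq_arcosh {t y : ℝ} (ht : 0 ≤ t) (hy : 1 ≤ y) :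
    cosh t = y ↔ t = Real.arcosh y := by
  constructor
  · rintro rfl
    exact (arcosh_cosh ht).symm
  · rintro rfl
    exact cosh_arcosh hy

theorem strictAntiOn_div_two_add_two_cosh {c : ℝ} (hc : 0 < c) :
    StrictAntiOn (fun t => c / (2 + 2 * cosh t)) (Set.Ici 0) := by
  intro s hs t ht hst
  have hcosh : cosh s < cosh t := by
    rwa [cosh_lt_cosh, abs_of_nonneg hs, abs_of_nonneg ht]
  exact div_lt_div_of_pos_left hc (by positivity) (by linarith)

theorem neg_one_add_two_mul_div_two_add_two_cosh_eq_zero_iff {c t : ℝ} (hc : 2 ≤ c)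
    (ht : 0 ≤ t) : -1 + 2 * (c / (2 + 2 * cosh t)) = 0 ↔ t = Real.arcosh (c - 1) := by
  have hden : 0 < 2 + 2 * cosh t := by positivity
  rw [← cosh_eq_iff_eq_arcosh ht (by linarith), neg_add_eq_zero, mul_div_assoc', eq_div_iff hden.ne']
  constructor <;> intro h <;> linarith

/-- For `β > 2`, with `h(w,β) = β/(2 + 2 cosh(β − 2wβ))`, the map
`w ↦ −1 + 2 h(w,β)` is strictly increasing on `[0, 1/2)` and vanishes at exactly
one point `w* = (β − arcosh(β−1))/(2β)`. -/
theorem neg_one_add_two_h_strictMono_and_root (β : ℝ) (hβ : 2 < β) :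
    StrictMonoOn (fun w : ℝ => -1 + 2 * (β / (2 + 2 * Real.cosh (β - 2 * w * β))))
        (Set.Ico (0:ℝ) (1/2)) ∧
      (β - arcosh (β - 1)) / (2 * β) ∈ Set.Ico (0:ℝ) (1/2) ∧
      ∀ w ∈ Set.Ico (0:ℝ) (1/2),
        (-1 + 2 * (β / (2 + 2 * Real.cosh (β - 2 * w * β))) = 0 ↔
          w = (β - arcosh (β - 1)) / (2 * β)) := by
  have hβ0 : 0 < β := by linarith
  have harg_nonneg : ∀ w ∈ Set.Ico (0:ℝ) (1/2), 0 ≤ β - 2 * w * β := fun w hw => by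
    nlinarith [hw.2]
  have hA_pos : 0 < Real.arcosh (β - 1) := arcosh_pos (by linarith)
  have hA_lt : Real.arcosh (β - 1) < β := by linarith [arcosh_lt_self (y := β - 1) (by linarith)]
  rw [arcosh_eq_real_arcosh]
  refine ⟨fun a ha b hb hab => ?_, ⟨by positivity, ?_⟩, fun w hw => ?_⟩
  · have hlt := strictAntiOn_div_two_add_two_cosh hβ0 (harg_nonneg b hb) (harg_nonneg a ha)
      (by nlinarith : β - 2 * b * β < β - 2 * a * β)
    dsimp only at hlt ⊢
    linarith
  · rw [div_lt_iff₀ (by positivity)]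
    linarith
  · rw [neg_one_add_two_mul_div_two_add_two_cosh_eq_zero_iff hβ.le (harg_nonneg w hw),
      eq_div_iff (by positivity)]
    constructor <;> intro h <;> linarith
end

section
/- Fix β > 2 and let g(w) = 1/(1 + exp(2βw − β)). If w ∈ [0, 1/2) satisfies w = g(1−w), and w* ∈ [0,1/2) is the unique point where d/dw g(1−w) = 1, then w < w*; consequently −1 + 2h(w,β) < 0 where h(w,β) = β/(2 + 2cosh(β − 2wβ)). -/
/-!
Write `g(1 - v) = σ(2βv - β)` with `σ` the logistic function, whose slope is
`2β / (2 + 2 cosh (2βv - β))`; the quantity `2 h(w, β)` is this slope at `v = w`.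
At a fixed point `w = σ(x)`, `x = 2βw - β < 0`, the identity `2σ(x) - 1 = sinh x / (1 + cosh x)`
combined with `sinh x < x` gives `2β < 2 + 2 cosh x`: the slope at `w` is below `1`.
Since `cosh (2βv - β)` decreases for `v ≤ 1/2`, the slope increases there, so the point `w*`
of slope `1` lies to the right of `w`.
-/

open Real

namespace Real

lemma sigmoid_mul_one_sub_sigmoid (x : ℝ) :
    sigmoid x * (1 - sigmoid x) = (2 + 2 * cosh x)⁻¹ := by
  rw [sigmoid_def, cosh_eq, exp_neg]
  field_simp
  ring

lemma two_mul_sigmoid_sub_one (x : ℝ) :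
    2 * sigmoid x - 1 = sinh x / (1 + cosh x) := by
  rw [sigmoid_def, sinh_eq, cosh_eq, exp_neg]
  field_simp
  ring

lemma hasDerivAt_sigmoid_mul_sub (a b v : ℝ) :
    HasDerivAt (fun v => sigmoid (a * v - b)) (a / (2 + 2 * cosh (a * v - b))) v := by
  have := (hasDerivAt_sigmoid (a * v - b)).comp v (((hasDerivAt_id' v).const_mul a).sub_const b)
  rwa [sigmoid_mul_one_sub_sigmoid, mul_one, inv_mul_eq_div] at this

end Real

lemma one_div_one_add_exp_eq_sigmoid (β : ℝ) :
    (fun v : ℝ => 1 / (1 + exp (2 * β * (1 - v) - β))) =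
      fun v => sigmoid (2 * β * v - β) := by
  ext v
  rw [sigmoid_def, one_div]
  ring_nf

lemma two_mul_lt_two_add_two_cosh_of_eq_sigmoid {β w : ℝ} (hw : w < 1 / 2)
    (hfix : w = sigmoid (2 * β * w - β)) : 2 * β < 2 + 2 * cosh (2 * β * w - β) := by
  obtain ⟨x, hx⟩ : ∃ x, 2 * β * w - β = x := ⟨_, rfl⟩
  rw [hx] at hfix ⊢
  have hx_neg : x < 0 := by
    rw [← sigmoid_lt_iff, sigmoid_zero, ← hfix]
    linarith
  have hsinh : sinh x < x := sinh_lt_self_iff.2 hx_neg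
  have hc : 0 < 1 + cosh x := by positivity
  have hw' : 2 * w - 1 = sinh x / (1 + cosh x) := by
    conv_lhs => rw [hfix]
    exact two_mul_sigmoid_sub_one x
  have hx_eq : x * (1 + cosh x) = β * sinh x := calc
    x * (1 + cosh x) = β * (2 * w - 1) * (1 + cosh x) := by
      linear_combination (1 + cosh x) * hx.symm
    _ = β * sinh x := by rw [hw']; field_simp
  nlinarith [sinh_neg_iff.2 hx_neg]

lemma cosh_two_mul_mul_sub_le_of_le {β u v : ℝ} (huv : u ≤ v) (hv : v ≤ 1 / 2) :
    cosh (2 * β * v - β) ≤ cosh (2 * β * u - β) := by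
  rw [cosh_le_cosh, show 2 * β * v - β = β * (2 * v - 1) by ring,
    show 2 * β * u - β = β * (2 * u - 1) by ring, abs_mul, abs_mul,
    abs_of_nonpos (show 2 * v - 1 ≤ 0 by linarith),
    abs_of_nonpos (show 2 * u - 1 ≤ 0 by linarith)]
  gcongr

theorem w_lt_wstar_and_eigenvalue_neg_general (β : ℝ)
    (w : ℝ) (hw : w ∈ Set.Ico (0:ℝ) (1/2))
    (hfix : w = 1 / (1 + Real.exp (2 * β * (1 - w) - β)))
    (wstar : ℝ)
    (hderiv : deriv (fun v : ℝ => 1 / (1 + Real.exp (2 * β * (1 - v) - β))) wstar = 1) :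
    w < wstar ∧ -1 + 2 * (β / (2 + 2 * Real.cosh (β - 2 * w * β))) < 0 := by
  rw [one_div_one_add_exp_eq_sigmoid, (hasDerivAt_sigmoid_mul_sub _ _ _).deriv,
    div_eq_one_iff_eq (by positivity)] at hderiv
  have hslope := two_mul_lt_two_add_two_cosh_of_eq_sigmoid hw.2
    (hfix.trans (congrFun (one_div_one_add_exp_eq_sigmoid β) w))
  constructor
  · by_contra! hle
    linarith [cosh_two_mul_mul_sub_le_of_le (β := β) hle hw.2.le]
  · rw [show β - 2 * w * β = -(2 * β * w - β) by ring, cosh_neg]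
    have := (div_lt_one (by positivity)).2 hslope
    rw [mul_div_assoc']
    linarith

/-- Fix `β > 2`, `g(w) = 1/(1 + exp(2βw − β))`. If `w ∈ [0,1/2)` satisfies
`w = g(1−w)` and `w* ∈ [0,1/2)` is the point where `(d/dw) g(1−w) = 1`, then
`w < w*`, and consequently `−1 + 2h(w,β) < 0` with `h(w,β) = β/(2+2cosh(β−2wβ))`. -/
theorem w_lt_wstar_and_eigenvalue_neg (β : ℝ) (hβ : 2 < β)
    (w : ℝ) (hw : w ∈ Set.Ico (0:ℝ) (1/2))
    (hfix : w = 1 / (1 + Real.exp (2 * β * (1 - w) - β)))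
    (wstar : ℝ) (hwstar : wstar ∈ Set.Ico (0:ℝ) (1/2))
    (hderiv : deriv (fun v : ℝ => 1 / (1 + Real.exp (2 * β * (1 - v) - β))) wstar = 1) :
    w < wstar ∧ -1 + 2 * (β / (2 + 2 * Real.cosh (β - 2 * w * β))) < 0 :=
  w_lt_wstar_and_eigenvalue_neg_general β w hw hfix wstar hderiv
end

section
/- Let θ = (a, −a, 1/2 − a, a − 1/2) with a ∈ [0, 1/2], and let π = (π¹_l, π¹_r, π²_l, π²_r) with each π^i_v ∈ [0,1] and π^i_l + π^i_r = 1 for i = 1,2. Then 1/2 − (θ·π) ≥ (1/2)·min_{i,v} π^i_v, where θ·π denotes the Euclidean inner product in ℝ⁴. -/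
/-- For `θ = (a, −a, 1/2 − a, a − 1/2)` with `a ∈ [0,1/2]` and `π` consisting of two
probability vectors `(π¹_l, π¹_r)` and `(π²_l, π²_r)`, one has
`1/2 − θ·π ≥ (1/2) min_{i,v} π^i_v`. -/
theorem inner_product_bound (a : ℝ) (ha : a ∈ Set.Icc (0:ℝ) (1/2))
    (p1l p1r p2l p2r : ℝ)
    (h1l : p1l ∈ Set.Icc (0:ℝ) 1) (h1r : p1r ∈ Set.Icc (0:ℝ) 1)
    (h2l : p2l ∈ Set.Icc (0:ℝ) 1) (h2r : p2r ∈ Set.Icc (0:ℝ) 1)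
    (hsum1 : p1l + p1r = 1) (hsum2 : p2l + p2r = 1) :
    1/2 - (a * p1l + (-a) * p1r + (1/2 - a) * p2l + (a - 1/2) * p2r)
      ≥ (1/2) * min (min p1l p1r) (min p2l p2r) := by
  obtain ⟨ha0, ha1⟩ := ha
  set m := min (min p1l p1r) (min p2l p2r) with hm
  have hm1 : m ≤ p1r := le_trans (min_le_left _ _) (min_le_right _ _)
  have hm2 : m ≤ p2r := le_trans (min_le_right _ _) (min_le_right _ _)
  have hm0 : 0 ≤ m := le_min (le_min h1l.1 h1r.1) (le_min h2l.1 h2r.1)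
  nlinarith [mul_nonneg ha0 (sub_nonneg.2 hm1), mul_nonneg (by linarith : (0:ℝ) ≤ 1 - 2*a) (sub_nonneg.2 hm2)]
end

section
/- Let b > 0 and p_k = 1/2 − b/√k for all k larger than some m, with p_k ∈ [0,1] arbitrary for k ≤ m, and let σ_n = 2(∑_{k=1}^n p_k(1−p_k))^{1/2}. Then for any constant Z₀, the quantity (Z₀/2 + ∑_{k=1}^n p_k − n/2)/√(∑_{k=1}^n p_k(1−p_k)) converges to −4b as n → ∞. -/
/-!
Past `m` the sums are explicit up to an additive constant: `∑ p_k = n/2 − b ∑ k^{-1/2} + O(1)` and,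
since `p_k(1 − p_k) = 1/4 − b²/k`, `∑ p_k(1 − p_k) = n/4 − b² ∑ 1/k + O(1)`. Comparing `k^{-1/2}`
with the increments of `2√k` gives `∑_{k ≤ n} k^{-1/2} ~ 2√n`, whence also `∑_{k ≤ n} 1/k = O(√n)`.
So the numerator is `−2b√n + o(√n)` and the square root is `√n/2 + o(√n)`.
-/

open Filter Finset Topology

theorem Finset.sum_Icc_eq_sum_add_of_eq_of_lt {α M : Type*} [LinearOrder α] [LocallyFiniteOrder α]
    [AddCommGroup M] {f g : α → M} {a m n : α} (hfg : ∀ k > m, f k = g k) (hmn : m ≤ n) :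
    ∑ k ∈ Icc a n, f k = ∑ k ∈ Icc a n, g k + ∑ k ∈ Icc a m, (f k - g k) := by
  have htail : ∑ k ∈ Icc a n, (f k - g k) = ∑ k ∈ Icc a m, (f k - g k) :=
    (sum_subset (Icc_subset_Icc_right hmn) fun k hkn hkm => by
      rw [hfg k (by simp_all), sub_self]).symm
  rw [← htail, sum_sub_distrib, add_sub_cancel]

namespace Real

lemma two_mul_sqrt_add_one_sub_sqrt_le_inv_sqrt {x : ℝ} (hx : 0 < x) :
    2 * (√(x + 1) - √x) ≤ (√x)⁻¹ := by
  have hs : 0 < √x := sqrt_pos.2 hx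
  have hx1 : √(x + 1) ^ 2 = x + 1 := sq_sqrt (by linarith)
  have hx0 : √x ^ 2 = x := sq_sqrt hx.le
  -- `(√(x + 1))² − (√x)² − 2√x (√(x + 1) − √x) = (√(x + 1) − √x)²`
  rw [← one_div, le_div_iff₀ hs]
  nlinarith [sq_nonneg (√(x + 1) - √x)]

lemma inv_sqrt_add_one_le_two_mul_sqrt_add_one_sub_sqrt {x : ℝ} (hx : 0 ≤ x) :
    (√(x + 1))⁻¹ ≤ 2 * (√(x + 1) - √x) := by
  have hs : 0 < √(x + 1) := sqrt_pos.2 (by linarith)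
  have hx1 : √(x + 1) ^ 2 = x + 1 := sq_sqrt (by linarith)
  have hx0 : √x ^ 2 = x := sq_sqrt hx
  rw [inv_le_iff_one_le_mul₀' hs]
  nlinarith [sq_nonneg (√(x + 1) - √x), sqrt_nonneg x]

end Real

lemma two_mul_sqrt_add_one_sub_two_le_sum_inv_sqrt (n : ℕ) :
    2 * (√(n + 1) - 1) ≤ ∑ k ∈ Icc 1 n, (√k)⁻¹ := by
  induction n with
  | zero => simp
  | succ n ih =>
    rw [sum_Icc_succ_top (by omega), Nat.cast_succ]
    have := Real.two_mul_sqrt_add_one_sub_sqrt_le_inv_sqrt (x := n + 1) (by positivity)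
    linarith

lemma sum_inv_sqrt_le_two_mul_sqrt (n : ℕ) : ∑ k ∈ Icc 1 n, (√k)⁻¹ ≤ 2 * √n := by
  induction n with
  | zero => simp
  | succ n ih =>
    rw [sum_Icc_succ_top (by omega), Nat.cast_succ]
    have := Real.inv_sqrt_add_one_le_two_mul_sqrt_add_one_sub_sqrt n.cast_nonneg
    linarith

lemma tendsto_inv_sqrt_natCast_atTop : Tendsto (fun n : ℕ => (√n)⁻¹) atTop (𝓝 0) := by
  simpa using (tendsto_inv_atTop_zero.comp tendsto_natCast_atTop_atTop).sqrt

lemma tendsto_sum_inv_sqrt_div_sqrt :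
    Tendsto (fun n : ℕ => (∑ k ∈ Icc 1 n, (√k)⁻¹) / √n) atTop (𝓝 2) := by
  have hlower : Tendsto (fun n : ℕ => 2 - 2 * (√n)⁻¹) atTop (𝓝 2) := by
    simpa using (tendsto_inv_sqrt_natCast_atTop.const_mul 2).const_sub 2
  refine tendsto_of_tendsto_of_tendsto_of_le_of_le' hlower tendsto_const_nhds ?_ ?_ <;>
    filter_upwards [eventually_ge_atTop 1] with n hn <;>
    have hs : 0 < √(n : ℝ) := Real.sqrt_pos.2 (by exact_mod_cast hn)
  · have hmono : √(n : ℝ) ≤ √(n + 1) := Real.sqrt_le_sqrt (by linarith)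
    rw [le_div_iff₀ hs, sub_mul, mul_assoc, inv_mul_cancel₀ hs.ne']
    linarith [two_mul_sqrt_add_one_sub_two_le_sum_inv_sqrt n]
  · rw [div_le_iff₀ hs]
    exact sum_inv_sqrt_le_two_mul_sqrt n

lemma tendsto_sum_inv_div :
    Tendsto (fun n : ℕ => (∑ k ∈ Icc 1 n, (k : ℝ)⁻¹) / n) atTop (𝓝 0) := by
  have hupper : Tendsto (fun n : ℕ => 2 * (√n)⁻¹) atTop (𝓝 0) := by
    simpa using tendsto_inv_sqrt_natCast_atTop.const_mul 2
  refine tendsto_of_tendsto_of_tendsto_of_le_of_le' tendsto_const_nhds hupper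
    (Eventually.of_forall fun n => by positivity) ?_
  filter_upwards [eventually_ge_atTop 1] with n hn
  have hterm : ∀ k ∈ Icc 1 n, (k : ℝ)⁻¹ ≤ (√k)⁻¹ := fun k hk => by
    have hk : (1 : ℝ) ≤ k := by exact_mod_cast (mem_Icc.1 hk).1
    exact inv_anti₀ (Real.sqrt_pos.2 (by linarith)) (Real.sqrt_le_self_iff.2 (Or.inr hk))
  calc (∑ k ∈ Icc 1 n, (k : ℝ)⁻¹) / n ≤ 2 * √n / n := by
        gcongr
        exact (sum_le_sum hterm).trans (sum_inv_sqrt_le_two_mul_sqrt n)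
    _ = 2 * (√n)⁻¹ := by rw [mul_div_assoc, Real.sqrt_div_self]

lemma half_sub_div_sqrt_mul_one_sub (b : ℝ) {x : ℝ} (hx : 0 ≤ x) :
    (1 / 2 - b / √x) * (1 - (1 / 2 - b / √x)) = 1 / 4 - b ^ 2 * x⁻¹ := by
  calc (1 / 2 - b / √x) * (1 - (1 / 2 - b / √x)) = 1 / 4 - b ^ 2 * (√x ^ 2)⁻¹ := by ring
    _ = 1 / 4 - b ^ 2 * x⁻¹ := by rw [Real.sq_sqrt hx]

section

variable {b : ℝ} {m : ℕ} {p : ℕ → ℝ}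

lemma tendsto_sum_sub_half_div_sqrt (hpk : ∀ k > m, p k = 1 / 2 - b / √k) (Z0 : ℝ) :
    Tendsto (fun n : ℕ => (Z0 / 2 + (∑ k ∈ Icc 1 n, p k) - n / 2) / √n) atTop (𝓝 (-2 * b)) := by
  set c := ∑ k ∈ Icc 1 m, (p k - (1 / 2 - b * (√k)⁻¹))
  have hsum : ∀ n ≥ m, ∑ k ∈ Icc 1 n, p k = n / 2 - b * ∑ k ∈ Icc 1 n, (√k)⁻¹ + c := fun n hn => by
    rw [sum_Icc_eq_sum_add_of_eq_of_lt (g := fun k : ℕ => 1 / 2 - b * (√k)⁻¹)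
        (fun k hk => by rw [hpk k hk, div_eq_mul_inv b]) hn,
      sum_sub_distrib, ← mul_sum, sum_const, Nat.card_Icc, Nat.add_sub_cancel, nsmul_eq_mul]
    ring
  have hlim := (tendsto_inv_sqrt_natCast_atTop.const_mul (Z0 / 2 + c)).sub
    (tendsto_sum_inv_sqrt_div_sqrt.const_mul b)
  rw [show (Z0 / 2 + c) * 0 - b * 2 = -2 * b by ring] at hlim
  refine hlim.congr' ?_
  filter_upwards [eventually_ge_atTop m] with n hn
  rw [hsum n hn]
  ring

lemma tendsto_sum_mul_one_sub_div (hpk : ∀ k > m, p k = 1 / 2 - b / √k) :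
    Tendsto (fun n : ℕ => (∑ k ∈ Icc 1 n, p k * (1 - p k)) / n) atTop (𝓝 (1 / 4)) := by
  set c := ∑ k ∈ Icc 1 m, (p k * (1 - p k) - (1 / 4 - b ^ 2 * (k : ℝ)⁻¹))
  have hsum : ∀ n ≥ m, ∑ k ∈ Icc 1 n, p k * (1 - p k) =
      n / 4 - b ^ 2 * ∑ k ∈ Icc 1 n, (k : ℝ)⁻¹ + c := fun n hn => by
    rw [sum_Icc_eq_sum_add_of_eq_of_lt (g := fun k : ℕ => 1 / 4 - b ^ 2 * (k : ℝ)⁻¹)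
        (fun k hk => by rw [hpk k hk, half_sub_div_sqrt_mul_one_sub b k.cast_nonneg]) hn,
      sum_sub_distrib, ← mul_sum, sum_const, Nat.card_Icc, Nat.add_sub_cancel, nsmul_eq_mul]
    ring
  have hlim := (tendsto_const_div_atTop_nhds_zero_nat c).sub
    (tendsto_sum_inv_div.const_mul (b ^ 2)) |>.const_add (1 / 4)
  rw [show (1 / 4 : ℝ) + (0 - b ^ 2 * 0) = 1 / 4 by ring] at hlim
  refine hlim.congr' ?_
  filter_upwards [eventually_ge_atTop m, eventually_gt_atTop 0] with n hm hn
  rw [hsum n hm]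
  field_simp
  ring

end

theorem mean_over_sd_tendsto_general (b : ℝ) (m : ℕ) (p : ℕ → ℝ)
    (hpk : ∀ k > m, p k = 1/2 - b / Real.sqrt k) (Z0 : ℝ) :
    Tendsto (fun n : ℕ =>
        (Z0 / 2 + (∑ k ∈ Finset.Icc 1 n, p k) - n / 2) /
          Real.sqrt (∑ k ∈ Finset.Icc 1 n, p k * (1 - p k)))
      atTop (nhds (-4 * b)) := by
  have hsd := (tendsto_sum_mul_one_sub_div hpk).sqrt
  rw [show √(1 / 4 : ℝ) = 1 / 2 by rw [Real.sqrt_eq_iff_mul_self_eq] <;> norm_num] at hsd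
  have hlim := (tendsto_sum_sub_half_div_sqrt hpk Z0).div hsd (by norm_num)
  rw [show -2 * b / (1 / 2) = -4 * b by ring] at hlim
  refine hlim.congr' ?_
  filter_upwards [eventually_gt_atTop 0] with n hn
  rw [Pi.div_apply, Real.sqrt_div' _ n.cast_nonneg, div_div_div_cancel_right₀ (by positivity)]

/-- Let `b > 0` and `p_k = 1/2 − b/√k` for `k > m` (with `p_k ∈ [0,1]` arbitrary for
`k ≤ m`). Then `(Z₀/2 + ∑_{k=1}^n p_k − n/2)/√(∑_{k=1}^n p_k(1−p_k)) → −4b`. -/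
theorem mean_over_sd_tendsto (b : ℝ) (hb : 0 < b) (m : ℕ) (p : ℕ → ℝ)
    (hp01 : ∀ k, p k ∈ Set.Icc (0:ℝ) 1)
    (hsmall : ∀ k > m, b / Real.sqrt k ≤ 1/2)
    (hpk : ∀ k > m, p k = 1/2 - b / Real.sqrt k) (Z0 : ℝ) :
    Tendsto (fun n : ℕ =>
        (Z0 / 2 + (∑ k ∈ Finset.Icc 1 n, p k) - n / 2) /
          Real.sqrt (∑ k ∈ Finset.Icc 1 n, p k * (1 - p k)))
      atTop (nhds (-4 * b)) :=
  mean_over_sd_tendsto_general b m p hpk Z0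
end

section
/- Let β ≥ 0, let π^i_v(x) = exp(−βx^j_v)/(exp(−βx^j_l) + exp(−βx^j_r)) for x ∈ Δ×Δ and j = 3−i, and suppose F(x) = −x + π(x) vanishes at x, i.e., x is an equilibrium. If additionally 0 ≤ β ≤ 2, then x = (1/2, 1/2, 1/2, 1/2). -/
/-!
Writing `u_i = 2 x^i_l - 1`, the equilibrium equations become `u_i = tanh (-(β/2) u_j)`.
Since `|tanh t| < |t|` for `t ≠ 0`, a nonzero `u_i` would give `|u_i| < (β/2) |u_j| ≤ |u_j|`
and symmetrically `|u_j| < |u_i|`, which is absurd once `β ≤ 2`.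
-/

open Real

namespace Real

theorem tanh_lt_self {x : ℝ} (hx : 0 < x) : tanh x < x := by
  have hmono : StrictMonoOn (fun t => t * cosh t - sinh t) (Set.Ici 0) := by
    refine strictMonoOn_of_deriv_pos (convex_Ici 0) (by fun_prop) fun t ht => ?_
    rw [interior_Ici] at ht
    have hderiv : HasDerivAt (fun t => t * cosh t - sinh t) (t * sinh t) t := by
      refine (((hasDerivAt_id' t).mul (hasDerivAt_cosh t)).sub (hasDerivAt_sinh t)).congr_deriv ?_
      ring
    rw [hderiv.deriv]
    exact mul_pos ht (sinh_pos_iff.2 ht)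
  have h := hmono Set.self_mem_Ici (Set.mem_Ici.2 hx.le) hx
  simp only [zero_mul, sinh_zero, sub_zero] at h
  rw [tanh_eq_sinh_div_cosh, div_lt_iff₀ (cosh_pos x)]
  linarith

theorem abs_tanh_lt_abs {x : ℝ} (hx : x ≠ 0) : |tanh x| < |x| := by
  rcases hx.lt_or_gt with hneg | hpos
  · have h := tanh_lt_self (neg_pos.2 hneg)
    rw [tanh_neg] at h
    have : tanh x < 0 := by
      rw [tanh_eq_sinh_div_cosh]; exact div_neg_of_neg_of_pos (sinh_neg_iff.2 hneg) (cosh_pos x)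
    rw [abs_of_neg this, abs_of_neg hneg]
    exact h
  · have : 0 < tanh x := by
      rw [tanh_eq_sinh_div_cosh]; exact div_pos (sinh_pos_iff.2 hpos) (cosh_pos x)
    rw [abs_of_pos this, abs_of_pos hpos]
    exact tanh_lt_self hpos

theorem exp_div_exp_add_exp (a b : ℝ) : exp a / (exp a + exp b) = (1 + tanh ((a - b) / 2)) / 2 := by
  have hsplit : ∀ c, exp c = exp ((a + b) / 2) * exp (c - (a + b) / 2) := fun c => by
    rw [← exp_add]; ring_nf
  rw [tanh_eq, hsplit a, hsplit b, ← mul_add, mul_div_mul_left _ _ (exp_pos _).ne']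
  have hpos : 0 < exp ((a - b) / 2) + exp (-((a - b) / 2)) := by positivity
  field_simp
  ring_nf

end Real

theorem eq_zero_of_eq_tanh_mul_of_eq_tanh_mul {c u v : ℝ} (hc : |c| ≤ 1)
    (hu : u = tanh (c * v)) (hv : v = tanh (c * u)) : u = 0 := by
  have shrink : ∀ {s t : ℝ}, s = tanh (c * t) → s ≠ 0 → |s| < |t| := fun {s t} hs hs0 => by
    have hct : c * t ≠ 0 := by rintro h; rw [h, tanh_zero] at hs; exact hs0 hs
    calc |s| = |tanh (c * t)| := by rw [hs]
      _ < |c * t| := abs_tanh_lt_abs hct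
      _ = |c| * |t| := abs_mul c t
      _ ≤ |t| := mul_le_of_le_one_left (abs_nonneg t) hc
  by_contra hu0
  have hv0 : v ≠ 0 := by rintro rfl; rw [mul_zero, tanh_zero] at hu; exact hu0 hu
  exact (shrink hu hu0).not_gt (shrink hv hv0)

theorem equilibrium_unique_of_beta_le_two_general (β : ℝ) (h0 : 0 ≤ β) (h2 : β ≤ 2)
    (x : Fin 2 → Fin 2 → ℝ)
    (hsum : ∀ i, x i 0 + x i 1 = 1)
    (heq : ∀ i v : Fin 2,
      x i v = Real.exp (-(β * x (1 - i) v)) /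
          (Real.exp (-(β * x (1 - i) 0)) + Real.exp (-(β * x (1 - i) 1)))) :
    ∀ i v : Fin 2, x i v = 1/2 := by
  have hc : |-(β / 2)| ≤ 1 := by rw [abs_le]; constructor <;> linarith
  have hu : ∀ i, 2 * x i 0 - 1 = tanh (-(β / 2) * (2 * x (1 - i) 0 - 1)) := fun i => by
    have hx1 : x (1 - i) 1 = 1 - x (1 - i) 0 := by linarith [hsum (1 - i)]
    rw [heq i 0, exp_div_exp_add_exp, hx1]
    ring_nf
  have hu0 := hu 0
  have hu1 := hu 1
  simp only [sub_zero, sub_self] at hu0 hu1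
  have hzero : ∀ i, x i 0 = 1 / 2 := by
    rw [Fin.forall_fin_two]
    constructor
    · linarith [eq_zero_of_eq_tanh_mul_of_eq_tanh_mul hc hu0 hu1]
    · linarith [eq_zero_of_eq_tanh_mul_of_eq_tanh_mul hc hu1 hu0]
  intro i
  rw [Fin.forall_fin_two]
  exact ⟨hzero i, by linarith [hsum i, hzero i]⟩

/-- Let `0 ≤ β ≤ 2` and `π^i_v(x) = exp(−β x^j_v)/(exp(−β x^j_l)+exp(−β x^j_r))`
for `x ∈ Δ×Δ`, `j = 3 − i` (walks indexed by `Fin 2`, `j = 1 - i`). If `x` is an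
equilibrium of `F(x) = −x + π(x)`, i.e. `π(x) = x`, then `x = (1/2,1/2,1/2,1/2)`. -/
theorem equilibrium_unique_of_beta_le_two (β : ℝ) (h0 : 0 ≤ β) (h2 : β ≤ 2)
    (x : Fin 2 → Fin 2 → ℝ)
    (hnn : ∀ i v, 0 ≤ x i v) (hsum : ∀ i, x i 0 + x i 1 = 1)
    (heq : ∀ i v : Fin 2,
      x i v = Real.exp (-(β * x (1 - i) v)) /
          (Real.exp (-(β * x (1 - i) 0)) + Real.exp (-(β * x (1 - i) 1)))) :
    ∀ i v : Fin 2, x i v = 1/2 :=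
  equilibrium_unique_of_beta_le_two_general β h0 h2 x hsum heq
end
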